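/- arXiv:math/0601418 — 4 statements merged into one kernel-verified Lean document; each statement's English description precedes it below -/
import Mathlib

section
/- Let C be a triangulated category and let X --f--> Y --g--> Z --h--> X[1] be a distinguished triangle with h ≠ 0. Write Y = ⊕_{i=1}^n Y_i and correspondingly f = (f_1,...,f_n), g = (g_1,...,g_n) with f_i : X → Y_i and g_i : Y_i → Z. Then each g_i is non-invertible. -/
open CategoryTheory Limits Pretriangulated

/-- In a distinguished triangle `X → ⨁ Yᵢ → Z → X⟦1⟧` with nonzero
connecting morphism, each component `gᵢ : Yᵢ ⟶ Z` of `g` is non-invertible. -/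
theorem stmt0 {C : Type*} [Category C] [Preadditive C] [HasZeroObject C]
    [HasShift C ℤ] [∀ n : ℤ, (CategoryTheory.shiftFunctor C n).Additive]
    [Pretriangulated C] [HasFiniteBiproducts C]
    {n : ℕ} (Y : Fin n → C) (X Z : C)
    (f : X ⟶ ⨁ Y) (g : (⨁ Y) ⟶ Z) (h : Z ⟶ X⟦(1 : ℤ)⟧)
    (hT : Triangle.mk f g h ∈ distinguishedTriangles (C := C))
    (hne : h ≠ 0) (i : Fin n) :
    ¬ IsIso (biproduct.ι Y i ≫ g) := by
  intro hiso
  apply hne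
  have h23 : g ≫ h = 0 := comp_distTriang_mor_zero₂₃ _ hT
  calc h = (inv (biproduct.ι Y i ≫ g) ≫ biproduct.ι Y i ≫ g) ≫ h := by simp
    _ = inv (biproduct.ι Y i ≫ g) ≫ biproduct.ι Y i ≫ (g ≫ h) := by
        simp only [Category.assoc]
    _ = 0 := by rw [h23]; simp
end

section
/- Let C be a triangulated category, X --f--> Y --g--> Z --> X[1] a distinguished triangle, and h : Z' → Z any morphism. If f is irreducible (i.e. f is neither a split monomorphism nor a split epimorphism, and in any factorization f = f₂ ∘ f₁, either f₁ is a split monomorphism or f₂ is a split epimorphism), then either h factors through g (there exists t : Z' → Y with h = g ∘ t) or g factors through h (there exists s : Y → Z' with g = h ∘ s). -/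
open CategoryTheory Limits Pretriangulated

/-- A morphism is irreducible if it is neither a split monomorphism nor a split
epimorphism, and in any factorization `f = f₁ ≫ f₂`, either `f₁` is a split
monomorphism or `f₂` is a split epimorphism. -/
def IsIrreducibleHom {C : Type*} [Category C] {X Y : C} (f : X ⟶ Y) : Prop :=
  ¬ IsSplitMono f ∧ ¬ IsSplitEpi f ∧
    ∀ ⦃W : C⦄ (f₁ : X ⟶ W) (f₂ : W ⟶ Y), f = f₁ ≫ f₂ → IsSplitMono f₁ ∨ IsSplitEpi f₂

/-!
Pull the triangle back along `h`: completing `h ≫ w` to a distinguished triangle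
`X --a--> E --b--> Z' --> X⟦1⟧` gives a morphism of triangles `(𝟙 X, φ, h)`, so `f = a ≫ φ`.
If `φ` is a split epimorphism, `g` factors through `h` via `b`. If `a` is a split monomorphism,
the connecting morphism `h ≫ w` vanishes, `b` is a split epimorphism, and `h` factors through `g`
via `φ`.
-/

namespace CategoryTheory.Pretriangulated

variable {C : Type*} [Category C] [Preadditive C] [HasZeroObject C] [HasShift C ℤ]
  [∀ n : ℤ, (CategoryTheory.shiftFunctor C n).Additive] [Pretriangulated C]

lemma Triangle.isSplitEpi_mor₂_of_mono₁ (T : Triangle C) (hT : T ∈ distTriang C)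
    (h₁ : Mono T.mor₁) : IsSplitEpi T.mor₂ :=
  have : Epi T.mor₂ := T.epi₂ hT (T.mor₃_eq_zero_of_mono₁ hT h₁)
  isSplitEpi_of_epi T.mor₂

lemma exists_distTriang_pullback {X Y Z Z' : C} {f : X ⟶ Y} {g : Y ⟶ Z} {w : Z ⟶ X⟦(1 : ℤ)⟧}
    (hT : Triangle.mk f g w ∈ distTriang C) (h : Z' ⟶ Z) :
    ∃ (E : C) (a : X ⟶ E) (b : E ⟶ Z') (φ : E ⟶ Y),
      Triangle.mk a b (h ≫ w) ∈ distTriang C ∧ a ≫ φ = f ∧ b ≫ h = φ ≫ g := by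
  obtain ⟨E, a, b, hT'⟩ := distinguished_cocone_triangle₂ (h ≫ w)
  obtain ⟨φ, hφ₁, hφ₂⟩ := complete_distinguished_triangle_morphism₂ _ _ hT' hT (𝟙 X) h
    (by change (h ≫ w) ≫ (𝟙 X)⟦(1 : ℤ)⟧' = h ≫ w; simp)
  exact ⟨E, a, b, φ, hT', hφ₁.trans (Category.id_comp f), hφ₂⟩

end CategoryTheory.Pretriangulated

/-- Given a distinguished triangle `X --f--> Y --g--> Z → X⟦1⟧` with `f`
irreducible and any morphism `h : Z' ⟶ Z`, either `h` factors through `g` or `g`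
factors through `h`. -/
theorem stmt2 {C : Type*} [Category C] [Preadditive C] [HasZeroObject C]
    [HasShift C ℤ] [∀ n : ℤ, (CategoryTheory.shiftFunctor C n).Additive]
    [Pretriangulated C]
    (X Y Z Z' : C) (f : X ⟶ Y) (g : Y ⟶ Z) (w : Z ⟶ X⟦(1 : ℤ)⟧)
    (hT : Triangle.mk f g w ∈ distinguishedTriangles (C := C))
    (hf : IsIrreducibleHom f) (h : Z' ⟶ Z) :
    (∃ t : Z' ⟶ Y, h = t ≫ g) ∨ (∃ s : Y ⟶ Z', g = s ≫ h) := by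
  obtain ⟨E, a, b, φ, hT', rfl, hbh⟩ := exists_distTriang_pullback hT h
  rcases hf.2.2 a φ rfl with ha | hφ
  · have : IsSplitEpi b := Triangle.isSplitEpi_mor₂_of_mono₁ _ hT' (inferInstanceAs (Mono a))
    refine Or.inl ⟨section_ b ≫ φ, ?_⟩
    rw [Category.assoc, ← hbh, IsSplitEpi.id_assoc]
  · refine Or.inr ⟨section_ φ ≫ b, ?_⟩
    rw [Category.assoc, hbh, IsSplitEpi.id_assoc]
end

section
/- Let 𝔞 be a small pre-additive category, f : 𝔟 ⊇ 𝔞 a full subcategory inclusion, and P a left 𝔟-module that is a direct summand of a finite direct sum ⊕_{i=1}^n 𝔟(B_i, -) with each B_i in the essential image of f. Then the canonical map 𝔟 ⊗_𝔞 (P restricted to 𝔞) → P is an isomorphism. -/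
open CategoryTheory Limits Opposite

universe u

/-!
For `M = 𝔟(F X, −)` the additive Yoneda lemma identifies both `Hom(M, N)` and
`Hom(M|𝔞, N|𝔞)` with `N(F X)`: a transformation out of `M|𝔞` is still determined by the
image of `𝟙 (F X)`, because fullness of `F` makes every morphism `F X ⟶ F A` come from `𝔞`.
Bijectivity of `φ ↦ φ|𝔞` passes to finite biproducts, since restriction is additive, and to
retracts, which covers `P`.
-/

namespace CategoryTheory

section MapBijective

variable {C D : Type*} [Category C] [Category D] (G : C ⥤ D)

lemma Functor.map_bijective_of_retract {P Q : C} (h : Retract P Q) (N : C)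
    (hQ : Function.Bijective (G.map : (Q ⟶ N) → (G.obj Q ⟶ G.obj N))) :
    Function.Bijective (G.map : (P ⟶ N) → (G.obj P ⟶ G.obj N)) := by
  constructor
  · intro φ φ' hφ
    have hr : h.r ≫ φ = h.r ≫ φ' := hQ.1 (by simp only [G.map_comp, hφ])
    simpa using h.i ≫= hr
  · intro ψ
    obtain ⟨χ, hχ⟩ := hQ.2 (G.map h.r ≫ ψ)
    refine ⟨h.i ≫ χ, ?_⟩
    rw [G.map_comp, hχ, ← Category.assoc, ← G.map_comp, h.retract, G.map_id, Category.id_comp]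

lemma Functor.map_bijective_biproduct [Preadditive C] [Preadditive D] [G.Additive]
    {ι : Type} [Fintype ι] (Q : ι → C) [HasBiproduct Q] (N : C)
    (hQ : ∀ i, Function.Bijective (G.map : (Q i ⟶ N) → (G.obj (Q i) ⟶ G.obj N))) :
    Function.Bijective (G.map : (⨁ Q ⟶ N) → (G.obj (⨁ Q) ⟶ G.obj N)) := by
  constructor
  · intro φ φ' hφ
    refine biproduct.hom_ext' _ _ fun i => (hQ i).1 ?_
    simp only [G.map_comp, hφ]
  · intro ψ
    choose χ hχ using fun i => (hQ i).2 (G.map (biproduct.ι Q i) ≫ ψ)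
    refine ⟨biproduct.desc χ, ?_⟩
    calc G.map (biproduct.desc χ) = ∑ i, G.map (biproduct.π Q i) ≫ G.map (χ i) := by
          simp only [biproduct.desc_eq, G.map_sum, G.map_comp]
      _ = G.map (∑ i, biproduct.π Q i ≫ biproduct.ι Q i) ≫ ψ := by
          simp only [hχ, G.map_sum, G.map_comp, Preadditive.sum_comp, Category.assoc]
      _ = ψ := by rw [biproduct.total, G.map_id, Category.id_comp]

end MapBijective

section PreadditiveCoyoneda

variable {C : Type*} [Category C] [Preadditive C]

lemma preadditiveCoyoneda_app_eq {Y c : C} {M : C ⥤ AddCommGrpCat}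
    (φ : preadditiveCoyoneda.obj (op Y) ⟶ M) (g : Y ⟶ c) :
    φ.app c g = M.map g (φ.app Y (𝟙 Y)) :=
  (congrArg (φ.app c) (Category.id_comp g).symm).trans (NatTrans.naturality_apply φ g (𝟙 Y))

lemma preadditiveCoyoneda_hom_ext {Y : C} {M : C ⥤ AddCommGrpCat}
    {φ φ' : preadditiveCoyoneda.obj (op Y) ⟶ M} (h : φ.app Y (𝟙 Y) = φ'.app Y (𝟙 Y)) :
    φ = φ' := by
  ext c g
  rw [preadditiveCoyoneda_app_eq φ g, preadditiveCoyoneda_app_eq φ' g, h]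

def preadditiveCoyonedaHomOfElement {Y : C} (M : C ⥤ AddCommGrpCat) [M.Additive] (x : M.obj Y) :
    preadditiveCoyoneda.obj (op Y) ⟶ M where
  app c := AddCommGrpCat.ofHom (AddMonoidHom.mk' (fun g : Y ⟶ c => M.map g x) fun g g' =>
    congrArg (fun f => f x) (M.map_add (f := g) (g := g')))
  naturality c c' h := by
    ext g
    exact congrArg (fun f => f x) (M.map_comp g h)

end PreadditiveCoyoneda

variable {𝔞 𝔟 : Type*} [Category 𝔞] [Category 𝔟] [Preadditive 𝔟]

lemma whiskerLeft_bijective_preadditiveCoyoneda (F : 𝔞 ⥤ 𝔟) [F.Full] (X : 𝔞)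
    (N : 𝔟 ⥤ AddCommGrpCat) [N.Additive] :
    Function.Bijective
      (fun φ : preadditiveCoyoneda.obj (op (F.obj X)) ⟶ N => Functor.whiskerLeft F φ) := by
  constructor
  · intro φ φ' hφ
    exact preadditiveCoyoneda_hom_ext (congrArg (fun t => t.app X (𝟙 (F.obj X))) hφ)
  · intro ψ
    refine ⟨preadditiveCoyonedaHomOfElement N (ψ.app X (𝟙 (F.obj X))), ?_⟩
    ext a g
    obtain ⟨h, rfl⟩ := F.map_surjective g
    exact ((congrArg (ψ.app a) (Category.id_comp _).symm).trans
      (NatTrans.naturality_apply ψ h (𝟙 (F.obj X)))).symm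

end CategoryTheory

theorem stmt5_general {𝔞 𝔟 : Type u} [SmallCategory 𝔞] [SmallCategory 𝔟]
    [Preadditive 𝔟]
    (F : 𝔞 ⥤ 𝔟) [F.Full]
    [HasFiniteBiproducts (𝔟 ⥤ AddCommGrpCat.{u})]
    (P : 𝔟 ⥤ AddCommGrpCat.{u})
    (n : ℕ) (B : Fin n → 𝔞)
    (s : P ⟶ ⨁ fun i => preadditiveCoyoneda.obj (op (F.obj (B i))))
    (r : (⨁ fun i => preadditiveCoyoneda.obj (op (F.obj (B i)))) ⟶ P)
    (hsr : s ≫ r = 𝟙 P)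
    (N : 𝔟 ⥤ AddCommGrpCat.{u}) [N.Additive] :
    Function.Bijective (fun φ : P ⟶ N => CategoryTheory.Functor.whiskerLeft F φ) :=
  ((Functor.whiskeringLeft 𝔞 𝔟 AddCommGrpCat).obj F).map_bijective_of_retract ⟨s, r, hsr⟩ N <|
    Functor.map_bijective_biproduct _ _ N fun i =>
      whiskerLeft_bijective_preadditiveCoyoneda F (B i) N

/-- Let `F : 𝔞 ⥤ 𝔟` be a fully faithful additive functor between small
preadditive categories, and let `P` be a `𝔟`-module which is a direct summand of a
finite direct sum `⨁ 𝔟(F Bᵢ, −)` of representables at objects in the image of `F`.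
Then the canonical map `𝔟 ⊗_𝔞 P|_𝔞 → P` is an isomorphism; equivalently (by
adjunction), for every `𝔟`-module `N` the restriction map
`Hom(P, N) → Hom(P|_𝔞, N|_𝔞)` is bijective. -/
theorem stmt5 {𝔞 𝔟 : Type u} [SmallCategory 𝔞] [SmallCategory 𝔟]
    [Preadditive 𝔞] [Preadditive 𝔟]
    (F : 𝔞 ⥤ 𝔟) [F.Full] [F.Faithful] [F.Additive]
    [HasFiniteBiproducts (𝔟 ⥤ AddCommGrpCat.{u})]
    (P : 𝔟 ⥤ AddCommGrpCat.{u}) [P.Additive]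
    (n : ℕ) (B : Fin n → 𝔞)
    (s : P ⟶ ⨁ fun i => preadditiveCoyoneda.obj (op (F.obj (B i))))
    (r : (⨁ fun i => preadditiveCoyoneda.obj (op (F.obj (B i)))) ⟶ P)
    (hsr : s ≫ r = 𝟙 P)
    (N : 𝔟 ⥤ AddCommGrpCat.{u}) [N.Additive] :
    Function.Bijective (fun φ : P ⟶ N => CategoryTheory.Functor.whiskerLeft F φ) :=
  stmt5_general F P n B s r hsr N
end

section
/- Let 𝔞 be a small pre-additive category such that every full subcategory of 𝔞 with finitely many objects is semi-hereditary (i.e. its category of finitely presented modules is abelian and hereditary). Then 𝔞 is itself semi-hereditary. -/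
open CategoryTheory Limits Opposite

universe u

/-- A module over a small preadditive category `𝔞` is finitely generated projective
iff it is a direct summand of a finite direct sum of representables `𝔞(Aᵢ, −)`. -/
def IsFGProjMod {𝔞 : Type u} [SmallCategory 𝔞] [Preadditive 𝔞]
    (M : 𝔞 ⥤ AddCommGrpCat.{u}) : Prop :=
  letI : HasFiniteBiproducts (𝔞 ⥤ AddCommGrpCat.{u}) :=
    HasFiniteBiproducts.of_hasFiniteProducts
  ∃ (n : ℕ) (A : Fin n → 𝔞)
    (s : M ⟶ ⨁ fun i => preadditiveCoyoneda.obj (op (A i)))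
    (r : (⨁ fun i => preadditiveCoyoneda.obj (op (A i))) ⟶ M),
      s ≫ r = 𝟙 M

/-- A small preadditive category is semi-hereditary: the kernel of any morphism
between finitely generated projective modules is finitely generated projective
and splits off.  (This is the equivalent formulation of the condition that the
finitely presented modules form an abelian hereditary category.) -/
def IsSemiHereditary (𝔞 : Type u) [SmallCategory 𝔞] [Preadditive 𝔞] : Prop :=
  ∀ (P Q : 𝔞 ⥤ AddCommGrpCat.{u}) (p : P ⟶ Q), IsFGProjMod P → IsFGProjMod Q →
    IsFGProjMod (kernel p) ∧ IsSplitMono (kernel.ι p)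

/-!
A morphism `P ⟶ M` out of a retract `P` of `⨁ 𝔞(Aᵢ, -)` is determined by, and can be
reconstructed from, its restriction to any full subcategory containing the `Aᵢ` (Yoneda), provided
`M` is additive. Let `j : K ⟶ P` be the kernel of `p : P ⟶ Q` and let `S` contain the `Aᵢ` and
the objects presenting `Q`. By hypothesis `j` splits on `S`; lift a retraction on `S` to
`t : P ⟶ K`. For an object `X`, `j` also splits on `S ∪ {X}`; lift a retraction there to
`t_X : P ⟶ K`. Then `t_X ≫ j ≫ t = t_X`, since both sides agree on `S`, where `j ≫ t` is the
identity; so at `X` we get `(j ≫ t)_X = (j ≫ t_X ≫ j ≫ t)_X = (j ≫ t_X)_X = 𝟙`. Hence `t` is a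
retraction of `j` and `K` is a summand of `P`.

Modules are arbitrary functors to `AddCommGrpCat`, so the additivity of `P` and `K` needed for
the lifts has to be derived from the presentation of `P`.
-/

namespace CategoryTheory

open Limits Opposite

section Additive

variable {C D : Type*} [Category C] [Category D] [Preadditive C] [Preadditive D]

lemma Functor.additive_of_retract {F G : C ⥤ D} [G.Additive] (h : Retract F G) : F.Additive where
  map_add {X Y f g} := by
    have hF : ∀ φ : X ⟶ Y, F.map φ = h.i.app X ≫ G.map φ ≫ h.r.app Y := fun φ => by
      rw [← NatTrans.naturality_assoc, ← NatTrans.comp_app, h.retract, NatTrans.id_app,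
        Category.comp_id]
    simp only [hF, G.map_add, Preadditive.add_comp, Preadditive.comp_add]

lemma Functor.additive_of_mono_app {F G : C ⥤ D} [G.Additive] (j : F ⟶ G)
    [∀ X, Mono (j.app X)] : F.Additive where
  map_add {X Y f g} := by
    rw [← cancel_mono (j.app Y), j.naturality, G.map_add, Preadditive.add_comp,
      Preadditive.comp_add, j.naturality, j.naturality]

instance Functor.additive_biproduct {J : Type} [Fintype J] (F : J → C ⥤ D) [HasBiproduct F]
    [∀ j, (F j).Additive] : (⨁ F).Additive where
  map_add {X Y f g} := by
    have hF : ∀ φ : X ⟶ Y, (⨁ F).map φ =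
        ∑ j, (biproduct.π F j).app X ≫ (F j).map φ ≫ (biproduct.ι F j).app Y := fun φ => by
      have htotal : 𝟙 ((⨁ F).obj X) = (∑ j, biproduct.π F j ≫ biproduct.ι F j).app X := by
        rw [biproduct.total, NatTrans.id_app]
      rw [← Category.id_comp ((⨁ F).map φ), htotal, NatTrans.app_sum, Preadditive.sum_comp]
      simp only [NatTrans.comp_app, Category.assoc, NatTrans.naturality]
    simp only [hF, Functor.map_add, Preadditive.add_comp, Preadditive.comp_add,
      Finset.sum_add_distrib]

lemma Functor.map_bijective_biproduct_s6 (F : C ⥤ D) [F.Additive] {J : Type} [Fintype J]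
    (Y : J → C) [HasBiproduct Y] (M : C)
    (hY : ∀ j, Function.Bijective (F.map : (Y j ⟶ M) → (F.obj (Y j) ⟶ F.obj M))) :
    Function.Bijective (F.map : (⨁ Y ⟶ M) → (F.obj (⨁ Y) ⟶ F.obj M)) := by
  have hext : ∀ φ ψ : F.obj (⨁ Y) ⟶ F.obj M,
      (∀ j, F.map (biproduct.ι Y j) ≫ φ = F.map (biproduct.ι Y j) ≫ ψ) → φ = ψ := by
    intro φ ψ h
    rw [← Category.id_comp φ, ← Category.id_comp ψ, ← F.map_id, ← biproduct.total, F.map_sum,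
      Preadditive.sum_comp, Preadditive.sum_comp]
    simp only [F.map_comp, Category.assoc, h]
  refine ⟨fun f g hfg => biproduct.hom_ext' _ _ fun j => (hY j).1 ?_, fun φ => ?_⟩
  · rw [F.map_comp, F.map_comp, hfg]
  · choose ψ hψ using fun j => (hY j).2 (F.map (biproduct.ι Y j) ≫ φ)
    exact ⟨biproduct.desc ψ, hext _ _ fun j => by rw [← F.map_comp, biproduct.ι_desc, hψ]⟩

end Additive

lemma Functor.map_bijective_of_retract_s6 {C D : Type*} [Category C] [Category D] (F : C ⥤ D)
    {X Y : C} (h : Retract X Y) (M : C)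
    (hY : Function.Bijective (F.map : (Y ⟶ M) → (F.obj Y ⟶ F.obj M))) :
    Function.Bijective (F.map : (X ⟶ M) → (F.obj X ⟶ F.obj M)) := by
  refine ⟨fun f g hfg => ?_, fun φ => ?_⟩
  · have : h.r ≫ f = h.r ≫ g := hY.1 (by rw [F.map_comp, F.map_comp, hfg])
    rw [← Category.id_comp f, ← Category.id_comp g, ← h.retract, Category.assoc,
      Category.assoc, this]
  · obtain ⟨ψ, hψ⟩ := hY.2 (F.map h.r ≫ φ)
    refine ⟨h.i ≫ ψ, ?_⟩
    rw [F.map_comp, hψ, ← Category.assoc, ← F.map_comp, h.retract, F.map_id, Category.id_comp]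

lemma isSplitMono_map_kernelι {C D : Type*} [Category C] [Category D] [HasZeroMorphisms C]
    [HasZeroMorphisms D] (F : C ⥤ D) [F.PreservesZeroMorphisms] {P Q : C} (p : P ⟶ Q)
    [HasKernel p] [HasKernel (F.map p)] [PreservesLimit (parallelPair p 0) F]
    [IsSplitMono (kernel.ι (F.map p))] :
    IsSplitMono (F.map (kernel.ι p)) := by
  rw [← kernelComparison_comp_ι]
  infer_instance

section Restriction

universe v w

variable {C : Type w} [Category.{v} C] [Preadditive C]

def preadditiveCoyonedaHomEquiv (A : C) (M : C ⥤ AddCommGrpCat.{v}) [M.Additive] :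
    (preadditiveCoyoneda.obj (op A) ⟶ M) ≃ M.obj A where
  toFun f := f.app A (𝟙 A)
  invFun m :=
    { app X := AddCommGrpCat.ofHom <|
        AddMonoidHom.mk' (fun f : A ⟶ X => M.map f m) fun f g : A ⟶ X => by
          change M.map (f + g) m = M.map f m + M.map g m
          rw [M.map_add]
          rfl
      naturality X Y g := by
        ext (f : A ⟶ X)
        change M.map (f ≫ g) m = M.map g (M.map f m)
        rw [Functor.map_comp]
        rfl }
  left_inv f := by
    ext X (g : A ⟶ X)
    exact (NatTrans.naturality_apply f g
      (show (preadditiveCoyoneda.obj (op A)).obj A from 𝟙 A)).symm.trans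
        (congrArg (f.app X) (Category.id_comp g))
  right_inv m := by
    change M.map (𝟙 A) m = m
    rw [Functor.map_id]
    rfl

namespace ObjectProperty

abbrev restriction (P : ObjectProperty C) :
    (C ⥤ AddCommGrpCat.{v}) ⥤ (P.FullSubcategory ⥤ AddCommGrpCat.{v}) :=
  (Functor.whiskeringLeft _ _ _).obj P.ι

variable (P : ObjectProperty C)

def restrictionPreadditiveCoyonedaIso {A : C} (hA : P A) :
    P.restriction.obj (preadditiveCoyoneda.obj (op A)) ≅ preadditiveCoyoneda.obj (op ⟨A, hA⟩) :=
  NatIso.ofComponents (fun _ => AddEquiv.toAddCommGrpIso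
    { toFun := fun f => ObjectProperty.homMk f, invFun := fun f => f.hom,
      left_inv := fun _ => rfl, right_inv := fun _ => rfl, map_add' := fun _ _ => rfl })
    (fun _ => by ext; rfl)

lemma restriction_map_bijective_preadditiveCoyoneda {A : C} (hA : P A)
    (M : C ⥤ AddCommGrpCat.{v}) [M.Additive] :
    Function.Bijective (P.restriction.map :
      (preadditiveCoyoneda.obj (op A) ⟶ M) → (P.restriction.obj _ ⟶ P.restriction.obj M)) := by
  refine ⟨fun f g hfg => (preadditiveCoyonedaHomEquiv A M).injective ?_, fun φ => ?_⟩
  · exact ConcreteCategory.congr_hom (NatTrans.congr_app hfg ⟨A, hA⟩) (𝟙 A)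
  · refine ⟨(preadditiveCoyonedaHomEquiv A M).symm (φ.app ⟨A, hA⟩ (𝟙 A)), ?_⟩
    ext ⟨X, hX⟩ g
    exact (NatTrans.naturality_apply φ
      (ObjectProperty.homMk g : (⟨A, hA⟩ : P.FullSubcategory) ⟶ ⟨X, hX⟩)
      (show (preadditiveCoyoneda.obj (op A)).obj A from 𝟙 A)).symm.trans
        (congrArg (φ.app ⟨X, hX⟩) (Category.id_comp g))

end ObjectProperty

end Restriction

namespace ObjectProperty

variable {C : Type u} [SmallCategory C] [Preadditive C]

attribute [local instance] HasFiniteBiproducts.of_hasFiniteProducts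

lemma restriction_map_bijective_of_retract (P : ObjectProperty C) {K : C ⥤ AddCommGrpCat.{u}}
    {n : ℕ} {A : Fin n → C} (hK : Retract K (⨁ fun i => preadditiveCoyoneda.obj (op (A i))))
    (hA : ∀ i, P (A i)) (M : C ⥤ AddCommGrpCat.{u}) [M.Additive] :
    Function.Bijective
      (P.restriction.map : (K ⟶ M) → (P.restriction.obj K ⟶ P.restriction.obj M)) :=
  P.restriction.map_bijective_of_retract_s6 hK M <| P.restriction.map_bijective_biproduct_s6 _ M
    fun i => P.restriction_map_bijective_preadditiveCoyoneda (hA i) M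

lemma isFGProjMod_restriction (P : ObjectProperty C) {K : C ⥤ AddCommGrpCat.{u}} {n : ℕ}
    {A : Fin n → C} (hK : Retract K (⨁ fun i => preadditiveCoyoneda.obj (op (A i))))
    (hA : ∀ i, P (A i)) :
    IsFGProjMod (P.restriction.obj K) := by
  let e := P.restriction.mapBiproduct _ ≪≫
    biproduct.mapIso fun i => P.restrictionPreadditiveCoyonedaIso (hA i)
  obtain ⟨s, r, h⟩ := (hK.map P.restriction).trans e.retract
  exact ⟨n, fun i => ⟨A i, hA i⟩, s, r, h⟩

lemma isSplitMono_of_isSplitMono_restriction {K L : C ⥤ AddCommGrpCat.{u}} [K.Additive]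
    (j : K ⟶ L) {n : ℕ} {A : Fin n → C}
    (hL : Retract L (⨁ fun i => preadditiveCoyoneda.obj (op (A i))))
    {S : ObjectProperty C} (hA : ∀ i, S (A i)) (hS : IsSplitMono (S.restriction.map j))
    (hX : ∀ X, ∃ T : ObjectProperty C, T X ∧ (∀ i, T (A i)) ∧ IsSplitMono (T.restriction.map j)) :
    IsSplitMono j := by
  obtain ⟨t, ht⟩ := (S.restriction_map_bijective_of_retract hL hA K).2
    (retraction (S.restriction.map j))
  refine IsSplitMono.mk' ⟨t, NatTrans.ext (funext fun X => ?_)⟩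
  obtain ⟨T, hXT, hAT, hT⟩ := hX X
  obtain ⟨tX, htX⟩ := (T.restriction_map_bijective_of_retract hL hAT K).2
    (retraction (T.restriction.map j))
  have hid : (j ≫ tX).app X = 𝟙 _ :=
    NatTrans.congr_app (show T.restriction.map (j ≫ tX) = 𝟙 _ by
      rw [Functor.map_comp, htX, IsSplitMono.id]) ⟨X, hXT⟩
  have hcomp : tX ≫ j ≫ t = tX := (S.restriction_map_bijective_of_retract hL hA K).1 <| by
    rw [Functor.map_comp, Functor.map_comp, ht, IsSplitMono.id, Category.comp_id]
  calc (j ≫ t).app X = (j ≫ tX).app X ≫ (j ≫ t).app X := by rw [hid, Category.id_comp]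
    _ = (j ≫ tX).app X := by rw [← NatTrans.comp_app, Category.assoc, hcomp]
    _ = 𝟙 _ := hid

end ObjectProperty

end CategoryTheory

lemma IsFGProjMod.of_retract {C : Type u} [SmallCategory C] [Preadditive C]
    {K M : C ⥤ AddCommGrpCat.{u}} (h : Retract K M) (hM : IsFGProjMod M) : IsFGProjMod K := by
  obtain ⟨n, A, s, r, hsr⟩ := hM
  obtain ⟨s', r', h'⟩ := h.trans ⟨s, r, hsr⟩
  exact ⟨n, A, s', r', h'⟩

/-- If every full subcategory of `𝔞` with finitely many objects is
semi-hereditary, then `𝔞` is semi-hereditary. -/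
theorem stmt6 (𝔞 : Type u) [SmallCategory 𝔞] [Preadditive 𝔞]
    (h : ∀ S : Set 𝔞, S.Finite → IsSemiHereditary (ObjectProperty.FullSubcategory (fun x : 𝔞 => x ∈ S))) :
    IsSemiHereditary 𝔞 := by
  intro P Q p hP hQ
  obtain ⟨n, A, sP, rP, hPr⟩ := hP
  obtain ⟨m, B, sQ, rQ, hQr⟩ := hQ
  let hPA : Retract P _ := ⟨sP, rP, hPr⟩
  have : P.Additive := Functor.additive_of_retract hPA
  have : (kernel p).Additive := Functor.additive_of_mono_app (kernel.ι p)
  let S := Set.range A ∪ Set.range B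
  have hS : S.Finite := (Set.finite_range A).union (Set.finite_range B)
  have hsplit (T : Set 𝔞) (hST : S ⊆ T) (hT : T.Finite) :
      IsSplitMono ((ObjectProperty.restriction (· ∈ T)).map (kernel.ι p)) := by
    have := (h T hT _ _ ((ObjectProperty.restriction (· ∈ T)).map p)
      (ObjectProperty.isFGProjMod_restriction _ hPA fun i => hST (Or.inl ⟨i, rfl⟩))
      (ObjectProperty.isFGProjMod_restriction _ ⟨sQ, rQ, hQr⟩ fun i => hST (Or.inr ⟨i, rfl⟩))).2
    exact isSplitMono_map_kernelι _ p
  have hj : IsSplitMono (kernel.ι p) :=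
    ObjectProperty.isSplitMono_of_isSplitMono_restriction (kernel.ι p) hPA (S := (· ∈ S))
      (fun i => Or.inl ⟨i, rfl⟩) (hsplit S le_rfl hS) fun X =>
        ⟨(· ∈ insert X S), Set.mem_insert X S, fun i => Set.mem_insert_of_mem X (Or.inl ⟨i, rfl⟩),
          hsplit _ (Set.subset_insert X S) (hS.insert X)⟩
  exact ⟨IsFGProjMod.of_retract ⟨kernel.ι p, retraction _, IsSplitMono.id _⟩ ⟨n, A, sP, rP, hPr⟩,
    hj⟩
end
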